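/- arXiv:2401.09651 — 2 statements merged into one kernel-verified Lean document; each statement's English description precedes it below -/
import Mathlib

section
/- Suppose the feasible set Ω is nonempty and contained in the closed Euclidean ball of radius C > 0 centered at the origin. Then for every w ≥ 0 (componentwise) the regularized LCQP has a unique minimizer ν*(w) over Ω, and the map w ↦ ν*(w) is Lipschitz continuous on the nonnegative orthant with constant (1+2C)/ε: for all w₁, w₂ ∈ ℝ^r with w₁ ≥ 0 and w₂ ≥ 0, ‖ν*(w₂) − ν*(w₁)‖₂ ≤ ((1+2C)/ε)·‖w₂ − w₁‖₂. -/
open Matrix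

/-- Euclidean (ℓ₂) norm of a finite real vector. -/
noncomputable def l2norm {k : ℕ} (v : Fin k → ℝ) : ℝ := Real.sqrt (∑ i, v i ^ 2)

/-!
For `w ≥ 0` the objective `f(·, w)` is `ε`-strongly convex, so on the compact convex polytope `Ω`
it has a unique minimizer `p`, and comparing with the midpoint of `p` and `ν` gives the quadratic
growth `f(p) + ε/2 ‖ν - p‖² ≤ f(ν)`. Adding the growth inequalities of `w₁` at `ν*(w₂)` and of
`w₂` at `ν*(w₁)` bounds `ε ‖ν*(w₂) - ν*(w₁)‖²` by `g(ν*(w₂)) - g(ν*(w₁))`, where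
`g = f(·, w₁) - f(·, w₂) = νᵀ D(w₁ - w₂) ν + c(w₁ - w₂)ᵀ ν`. Since `D(w₁ - w₂)` is symmetric,
`g(x) - g(y) = (x - y)ᵀ D(w₁ - w₂) (x + y) + c(w₁ - w₂)ᵀ (x - y)`, which on the ball of radius `C`
is at most `(1 + 2C) ‖w₁ - w₂‖ ‖x - y‖`.
-/

section L2

variable {k : ℕ}

lemma l2norm_eq_norm_toLp (v : Fin k → ℝ) : l2norm v = ‖WithLp.toLp 2 v‖ := by
  simp [l2norm, EuclideanSpace.norm_eq, Real.norm_eq_abs, sq_abs]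

lemma dotProduct_eq_inner_toLp (u v : Fin k → ℝ) :
    u ⬝ᵥ v = inner ℝ (WithLp.toLp 2 u) (WithLp.toLp 2 v) := by
  simp [dotProduct, PiLp.inner_apply, mul_comm]

lemma l2norm_nonneg (v : Fin k → ℝ) : 0 ≤ l2norm v := Real.sqrt_nonneg _

lemma l2norm_eq_zero {v : Fin k → ℝ} : l2norm v = 0 ↔ v = 0 := by
  simp [l2norm_eq_norm_toLp]

lemma l2norm_sub_comm (u v : Fin k → ℝ) : l2norm (u - v) = l2norm (v - u) := by
  simp only [l2norm_eq_norm_toLp, WithLp.toLp_sub, norm_sub_rev]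

lemma l2norm_add_le (u v : Fin k → ℝ) : l2norm (u + v) ≤ l2norm u + l2norm v := by
  simpa only [l2norm_eq_norm_toLp, WithLp.toLp_add] using norm_add_le _ _

lemma dotProduct_self_eq_l2norm_sq (v : Fin k → ℝ) : v ⬝ᵥ v = l2norm v ^ 2 := by
  rw [dotProduct_eq_inner_toLp, l2norm_eq_norm_toLp, real_inner_self_eq_norm_sq]

lemma dotProduct_le_l2norm_mul (u v : Fin k → ℝ) : u ⬝ᵥ v ≤ l2norm u * l2norm v := by
  rw [dotProduct_eq_inner_toLp, l2norm_eq_norm_toLp, l2norm_eq_norm_toLp]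
  exact real_inner_le_norm _ _

lemma norm_le_l2norm (v : Fin k → ℝ) : ‖v‖ ≤ l2norm v := by
  refine (pi_norm_le_iff_of_nonneg (l2norm_nonneg v)).mpr fun i => ?_
  rw [l2norm_eq_norm_toLp]
  exact PiLp.norm_apply_le (WithLp.toLp 2 v) i

end L2

section Polyhedron

variable {m n : Type*} [Fintype n] (A : Matrix m n ℝ) (b : m → ℝ)

lemma setOf_mulVec_add_nonpos_eq_preimage :
    {ν | ∀ i, A.mulVec ν i + b i ≤ 0} = A.mulVecLin ⁻¹' Set.Iic (-b) := by
  ext ν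
  simp [Pi.le_def, le_neg_iff_add_nonpos_right]

lemma convex_setOf_mulVec_add_nonpos : Convex ℝ {ν | ∀ i, A.mulVec ν i + b i ≤ 0} := by
  rw [setOf_mulVec_add_nonpos_eq_preimage]
  exact (convex_Iic _).linear_preimage _

lemma isClosed_setOf_mulVec_add_nonpos : IsClosed {ν | ∀ i, A.mulVec ν i + b i ≤ 0} := by
  rw [setOf_mulVec_add_nonpos_eq_preimage]
  exact isClosed_Iic.preimage (LinearMap.continuous_of_finiteDimensional _)

end Polyhedron

section QuadraticObjective

variable {n : ℕ}

def quadraticObjective (Q : Matrix (Fin n) (Fin n) ℝ) (q ν : Fin n → ℝ) : ℝ :=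
  ν ⬝ᵥ Q *ᵥ ν + q ⬝ᵥ ν

lemma continuous_quadraticObjective (Q : Matrix (Fin n) (Fin n) ℝ) (q : Fin n → ℝ) :
    Continuous (quadraticObjective Q q) := by
  unfold quadraticObjective
  fun_prop

lemma quadraticObjective_sub (Q Q' : Matrix (Fin n) (Fin n) ℝ) (q q' ν : Fin n → ℝ) :
    quadraticObjective (Q - Q') (q - q') ν =
      quadraticObjective Q q ν - quadraticObjective Q' q' ν := by
  simp only [quadraticObjective, sub_mulVec, dotProduct_sub, sub_dotProduct]
  ring

lemma quadraticObjective_add_sub_two_mul_midpoint (Q : Matrix (Fin n) (Fin n) ℝ)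
    (q x y : Fin n → ℝ) :
    quadraticObjective Q q x + quadraticObjective Q q y
        - 2 * quadraticObjective Q q ((1 / 2 : ℝ) • x + (1 / 2 : ℝ) • y) =
      1 / 2 * ((x - y) ⬝ᵥ Q *ᵥ (x - y)) := by
  simp only [quadraticObjective, mulVec_add, mulVec_sub, mulVec_smul, dotProduct_add,
    dotProduct_sub, dotProduct_smul, add_dotProduct, sub_dotProduct, smul_dotProduct, smul_eq_mul]
  ring

lemma quadraticObjective_sub_of_isSymm {S : Matrix (Fin n) (Fin n) ℝ} (hS : S.IsSymm)
    (q x y : Fin n → ℝ) :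
    quadraticObjective S q x - quadraticObjective S q y =
      (x - y) ⬝ᵥ S *ᵥ (x + y) + q ⬝ᵥ (x - y) := by
  have hyx : y ⬝ᵥ S *ᵥ x = x ⬝ᵥ S *ᵥ y := by
    rw [dotProduct_mulVec, dotProduct_comm, ← mulVec_transpose, hS.eq]
  simp only [quadraticObjective, mulVec_add, dotProduct_add, sub_dotProduct, dotProduct_sub, hyx]
  ring

lemma quadraticObjective_sub_le {S : Matrix (Fin n) (Fin n) ℝ} (hS : S.IsSymm) {q x y : Fin n → ℝ}
    {L R : ℝ} (hSL : ∀ v, l2norm (S *ᵥ v) ≤ L * l2norm v) (hqL : l2norm q ≤ L)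
    (hx : l2norm x ≤ R) (hy : l2norm y ≤ R) :
    quadraticObjective S q x - quadraticObjective S q y ≤ (1 + 2 * R) * L * l2norm (x - y) := by
  have hL : 0 ≤ L := (l2norm_nonneg q).trans hqL
  have ht := l2norm_nonneg (x - y)
  have hxy : l2norm (S *ᵥ (x + y)) ≤ L * (2 * R) :=
    (hSL _).trans (mul_le_mul_of_nonneg_left (by linarith [l2norm_add_le x y]) hL)
  rw [quadraticObjective_sub_of_isSymm hS]
  calc (x - y) ⬝ᵥ S *ᵥ (x + y) + q ⬝ᵥ (x - y)
      ≤ l2norm (x - y) * l2norm (S *ᵥ (x + y)) + l2norm q * l2norm (x - y) :=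
        add_le_add (dotProduct_le_l2norm_mul _ _) (dotProduct_le_l2norm_mul _ _)
    _ ≤ l2norm (x - y) * (L * (2 * R)) + L * l2norm (x - y) := by gcongr
    _ = (1 + 2 * R) * L * l2norm (x - y) := by ring

variable {Q : Matrix (Fin n) (Fin n) ℝ} {q : Fin n → ℝ} {ε : ℝ} {S : Set (Fin n → ℝ)}
  {p ν : Fin n → ℝ}

lemma quadraticObjective_add_le_of_isMinOn (hQ : ∀ v, ε * l2norm v ^ 2 ≤ v ⬝ᵥ Q *ᵥ v)
    (hS : Convex ℝ S) (hp : p ∈ S) (hmin : IsMinOn (quadraticObjective Q q) S p) (hν : ν ∈ S) :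
    quadraticObjective Q q p + ε / 2 * l2norm (ν - p) ^ 2 ≤ quadraticObjective Q q ν := by
  have hmid := hmin (hS hν hp (by norm_num) (by norm_num) (by norm_num) :
    (1 / 2 : ℝ) • ν + (1 / 2 : ℝ) • p ∈ S)
  have := quadraticObjective_add_sub_two_mul_midpoint Q q ν p
  linarith [hQ (ν - p), hmid.out]

lemma eq_of_isMinOn_quadraticObjective (hε : 0 < ε) (hQ : ∀ v, ε * l2norm v ^ 2 ≤ v ⬝ᵥ Q *ᵥ v)
    (hS : Convex ℝ S) (hp : p ∈ S) (hpmin : IsMinOn (quadraticObjective Q q) S p) (hν : ν ∈ S)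
    (hνmin : IsMinOn (quadraticObjective Q q) S ν) : ν = p := by
  have hgrowth := quadraticObjective_add_le_of_isMinOn hQ hS hp hpmin hν
  have hsq : l2norm (ν - p) ^ 2 ≤ 0 := by
    nlinarith [(hνmin hp).out]
  rw [← sub_eq_zero, ← l2norm_eq_zero]
  exact pow_eq_zero_iff two_ne_zero |>.mp (le_antisymm hsq (sq_nonneg _))

end QuadraticObjective

lemma mul_l2norm_sq_le_dotProduct_add_smul_one {n : ℕ} {P : Matrix (Fin n) (Fin n) ℝ}
    (hP : P.PosSemidef) (ε : ℝ) (v : Fin n → ℝ) :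
    ε * l2norm v ^ 2 ≤ v ⬝ᵥ (P + ε • (1 : Matrix (Fin n) (Fin n) ℝ)) *ᵥ v := by
  have hPv : 0 ≤ v ⬝ᵥ P *ᵥ v := by simpa using hP.dotProduct_mulVec_nonneg v
  rw [add_mulVec, smul_mulVec, one_mulVec, dotProduct_add, dotProduct_smul,
    dotProduct_self_eq_l2norm_sq, smul_eq_mul]
  linarith

lemma l2norm_sub_le_div_of_quadratic_growth {n : ℕ} {g₁ g₂ : (Fin n → ℝ) → ℝ}
    {p₁ p₂ : Fin n → ℝ} {ε K : ℝ} (hε : 0 < ε) (hK : 0 ≤ K)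
    (h₁ : g₁ p₁ + ε / 2 * l2norm (p₂ - p₁) ^ 2 ≤ g₁ p₂)
    (h₂ : g₂ p₂ + ε / 2 * l2norm (p₁ - p₂) ^ 2 ≤ g₂ p₁)
    (hdiff : (g₁ p₂ - g₂ p₂) - (g₁ p₁ - g₂ p₁) ≤ K * l2norm (p₂ - p₁)) :
    l2norm (p₂ - p₁) ≤ K / ε := by
  rw [l2norm_sub_comm p₁] at h₂
  set t := l2norm (p₂ - p₁)
  have ht : 0 ≤ t := l2norm_nonneg _
  rw [le_div_iff₀ hε]
  rcases ht.eq_or_lt with ht | ht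
  · rw [← ht, zero_mul]
    exact hK
  · have : t * ε * t ≤ K * t := by nlinarith
    exact le_of_mul_le_mul_right this ht

theorem lcqp_minimizer_lipschitz_general
    (N M r : ℕ)
    (ε : ℝ) (hε : 0 < ε)
    (A : Matrix (Fin M) (Fin N) ℝ) (b : Fin M → ℝ)
    (Ω : Set (Fin N → ℝ))
    (hΩ : Ω = {ν | ∀ i, A.mulVec ν i + b i ≤ 0})
    (D : (Fin r → ℝ) →ₗ[ℝ] Matrix (Fin N) (Fin N) ℝ)
    (hDpsd : ∀ w : Fin r → ℝ, 0 ≤ w → (D w).PosSemidef)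
    (hDbound : ∀ (w : Fin r → ℝ) (ν : Fin N → ℝ),
      l2norm ((D w).mulVec ν) ≤ l2norm w * l2norm ν)
    (c : (Fin r → ℝ) →ₗ[ℝ] (Fin N → ℝ))
    (hcbound : ∀ w : Fin r → ℝ, l2norm (c w) ≤ l2norm w)
    (f : (Fin N → ℝ) → (Fin r → ℝ) → ℝ)
    (hf : ∀ ν w, f ν w =
      ν ⬝ᵥ ((D w + ε • (1 : Matrix (Fin N) (Fin N) ℝ)).mulVec ν) + c w ⬝ᵥ ν)
    (C : ℝ)
    (hΩne : Ω.Nonempty)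
    (hΩball : ∀ ν ∈ Ω, l2norm ν ≤ C) :
    ∃ νstar : (Fin r → ℝ) → (Fin N → ℝ),
      (∀ w : Fin r → ℝ, 0 ≤ w →
        νstar w ∈ Ω ∧ (∀ ν ∈ Ω, f (νstar w) w ≤ f ν w) ∧
        (∀ ν ∈ Ω, (∀ ν' ∈ Ω, f ν w ≤ f ν' w) → ν = νstar w)) ∧
      (∀ w₁ w₂ : Fin r → ℝ, 0 ≤ w₁ → 0 ≤ w₂ →
        l2norm (νstar w₂ - νstar w₁) ≤ ((1 + 2 * C) / ε) * l2norm (w₂ - w₁)) := by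
  obtain rfl : f = fun ν w => quadraticObjective (D w + ε • 1) (c w) ν := funext₂ hf
  have hconv : Convex ℝ Ω := hΩ ▸ convex_setOf_mulVec_add_nonpos A b
  have hcompact : IsCompact Ω :=
    Metric.isCompact_of_isClosed_isBounded (hΩ ▸ isClosed_setOf_mulVec_add_nonpos A b)
      (isBounded_iff_forall_norm_le.mpr ⟨C, fun ν hν => (norm_le_l2norm ν).trans (hΩball ν hν)⟩)
  choose νstar hmem hmin using fun w => hcompact.exists_isMinOn hΩne
    (continuous_quadraticObjective (D w + ε • 1) (c w)).continuousOn
  have hstrong (w) (hw : 0 ≤ w) := mul_l2norm_sq_le_dotProduct_add_smul_one (hDpsd w hw) ε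
  refine ⟨νstar, fun w hw => ⟨hmem w, fun ν hν => hmin w hν, fun ν hν hνmin => ?_⟩,
    fun w₁ w₂ hw₁ hw₂ => ?_⟩
  · exact eq_of_isMinOn_quadraticObjective hε (hstrong w hw) hconv (hmem w) (hmin w) hν hνmin
  have hC : 0 ≤ C := (l2norm_nonneg _).trans (hΩball _ (hmem w₁))
  have hsymm : (D (w₁ - w₂)).IsSymm := by
    rw [map_sub]
    exact isHermitian_iff_isSymm.mp ((hDpsd w₁ hw₁).isHermitian.sub (hDpsd w₂ hw₂).isHermitian)
  rw [l2norm_sub_comm w₂, div_mul_eq_mul_div]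
  refine l2norm_sub_le_div_of_quadratic_growth hε (mul_nonneg (by linarith) (l2norm_nonneg _))
    (quadraticObjective_add_le_of_isMinOn (hstrong w₁ hw₁) hconv (hmem w₁) (hmin w₁) (hmem w₂))
    (quadraticObjective_add_le_of_isMinOn (hstrong w₂ hw₂) hconv (hmem w₂) (hmin w₂) (hmem w₁)) ?_
  rw [← quadraticObjective_sub, ← quadraticObjective_sub, add_sub_add_right_eq_sub, ← map_sub,
    ← map_sub]
  exact quadraticObjective_sub_le hsymm (hDbound _) (hcbound _) (hΩball _ (hmem w₂))
    (hΩball _ (hmem w₁))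

/-- Lipschitz continuity of the unique minimizer of the
regularized LCQP with respect to the nonnegative symbolic weights. -/
theorem lcqp_minimizer_lipschitz
    (N M r : ℕ) (hN : 0 < N) (hM : 0 < M) (hr : 0 < r)
    (ε : ℝ) (hε : 0 < ε)
    (A : Matrix (Fin M) (Fin N) ℝ) (b : Fin M → ℝ)
    (Ω : Set (Fin N → ℝ))
    (hΩ : Ω = {ν | ∀ i, A.mulVec ν i + b i ≤ 0})
    (D : (Fin r → ℝ) →ₗ[ℝ] Matrix (Fin N) (Fin N) ℝ)
    (hDdiag : ∀ w, (D w).IsDiag)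
    (hDpsd : ∀ w : Fin r → ℝ, 0 ≤ w → (D w).PosSemidef)
    (hDbound : ∀ (w : Fin r → ℝ) (ν : Fin N → ℝ),
      l2norm ((D w).mulVec ν) ≤ l2norm w * l2norm ν)
    (c : (Fin r → ℝ) →ₗ[ℝ] (Fin N → ℝ))
    (hcbound : ∀ w : Fin r → ℝ, l2norm (c w) ≤ l2norm w)
    (f : (Fin N → ℝ) → (Fin r → ℝ) → ℝ)
    (hf : ∀ ν w, f ν w =
      ν ⬝ᵥ ((D w + ε • (1 : Matrix (Fin N) (Fin N) ℝ)).mulVec ν) + c w ⬝ᵥ ν)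
    (C : ℝ) (hC : 0 < C)
    (hΩne : Ω.Nonempty)
    (hΩball : ∀ ν ∈ Ω, l2norm ν ≤ C) :
    ∃ νstar : (Fin r → ℝ) → (Fin N → ℝ),
      (∀ w : Fin r → ℝ, 0 ≤ w →
        νstar w ∈ Ω ∧ (∀ ν ∈ Ω, f (νstar w) w ≤ f ν w) ∧
        (∀ ν ∈ Ω, (∀ ν' ∈ Ω, f ν w ≤ f ν' w) → ν = νstar w)) ∧
      (∀ w₁ w₂ : Fin r → ℝ, 0 ≤ w₁ → 0 ≤ w₂ →
        l2norm (νstar w₂ - νstar w₁) ≤ ((1 + 2 * C) / ε) * l2norm (w₂ - w₁)) :=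
  lcqp_minimizer_lipschitz_general N M r ε hε A b Ω hΩ D hDpsd hDbound c hcbound f hf C hΩne hΩball
end

section
/- Fix b ∈ ℝ^M and i ∈ {1,…,M}. Suppose Ω(b) is nonempty and there exists a feasible point ν̄ ∈ Ω(b) strictly satisfying the i-th constraint, i.e., (Aν̄ + b)_i < 0. Then the function φ(t) := V(b + t·e_i) (where e_i is the i-th standard basis vector of ℝ^M) is finite on a neighborhood of t = 0 and convex there, and its convex subdifferential at t = 0 equals the set of i-th components of optimal dual solutions: ∂φ(0) = { μ*_i : μ* ∈ argmin_{μ ∈ ℝ^M, μ ≥ 0} h(μ; b) }, and this set is nonempty and bounded. -/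
/-!
Let `f` be the primal objective and `x` the primal minimizer at `b`. At `x` no feasible direction
decreases `f`, and Farkas' lemma (Hahn–Banach plus closedness of finitely generated cones) turns
this into KKT multipliers. Completing the square in the Lagrangian shows that the dual minimizers
are exactly the KKT multipliers at `x`, and that such a multiplier `μ` satisfies
`V b' ≥ V b + μ ⬝ (b' - b)`. This gives one inclusion, and the bound
`μ i ≤ (V (b + δ eᵢ) - V b) / δ`, where `δ` is the slack of `ν̄` in the `i`-th constraint.
Conversely, a subgradient `g` of the convex function `t ↦ V (b + t eᵢ)` near `0` is a global
one, so `x` minimizes `f y + g (A y)ᵢ` subject to the other constraints; its multipliers,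
with `g` in coordinate `i`, are KKT multipliers at `x`.
-/

open Finset Matrix Filter Topology

section ConicalCombination

variable {ι : Type*} [Fintype ι]

theorem Finset.sum_coe_sort_eq_sum_of_eq_zero {M : Type*} [AddCommMonoid M] (s : Finset ι)
    (f : ι → M) (hf : ∀ j ∉ s, f j = 0) : ∑ j : s, f j = ∑ j, f j :=
  (s.sum_coe_sort f).trans (Finset.sum_subset (Finset.subset_univ s) fun j _ hj => hf j hj)

theorem exists_nonneg_sub_smul_card_support_lt {μ ν : ι → ℝ} (hμ : 0 ≤ μ)
    (hsupp : ∀ j, μ j = 0 → ν j = 0) (hν : ν ≠ 0) :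
    ∃ r : ℝ, 0 ≤ μ - r • ν ∧ #{j | (μ - r • ν) j ≠ 0} < #{j | μ j ≠ 0} := by
  classical
  wlog hpos : ∃ j, 0 < ν j generalizing ν
  · obtain ⟨j, hj⟩ : ∃ j, ν j ≠ 0 := by
      by_contra! h
      exact hν (funext h)
    push Not at hpos
    obtain ⟨r, hr⟩ := this (ν := -ν) (fun j hj => by simp [hsupp j hj]) (neg_ne_zero.mpr hν)
      ⟨j, neg_pos.mpr (lt_of_le_of_ne (hpos j) hj)⟩
    exact ⟨-r, by simpa using hr⟩
  obtain ⟨j₀, hj₀, hmin⟩ := Finset.exists_min_image {j | 0 < ν j} (fun j => μ j / ν j)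
    (by simpa [Finset.Nonempty] using hpos)
  simp only [Finset.mem_filter, Finset.mem_univ, true_and] at hj₀ hmin
  have hr : 0 ≤ μ j₀ / ν j₀ := div_nonneg (hμ j₀) hj₀.le
  refine ⟨μ j₀ / ν j₀, fun j => ?_, Finset.card_lt_card ?_⟩
  · rcases lt_or_ge 0 (ν j) with hj | hj
    · have := hmin j hj
      rw [le_div_iff₀ hj] at this
      simpa using this
    · simpa using add_nonneg (hμ j) (mul_nonneg hr (neg_nonneg.mpr hj))
  · rw [Finset.ssubset_iff_of_subset]
    · exact ⟨j₀, by simpa using fun h => hj₀.ne' (hsupp j₀ h), by simp [hj₀.ne']⟩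
    · intro j
      simp only [Finset.mem_filter, Finset.mem_univ, true_and]
      intro hj hμj
      simp [hμj, hsupp j hμj] at hj

variable {E : Type*} [AddCommGroup E] [Module ℝ E]

/-- Carathéodory's theorem for cones: a nonnegative representation of minimal support uses
linearly independent vectors. -/
theorem exists_linearIndependent_nonneg_sum_eq (v : ι → E) {μ : ι → ℝ} (hμ : 0 ≤ μ) :
    ∃ s : Finset ι, LinearIndependent ℝ (fun j : s => v j) ∧
      ∃ κ : s → ℝ, 0 ≤ κ ∧ ∑ j, κ j • v j = ∑ j, μ j • v j := by
  classical
  obtain ⟨κ, ⟨hκ, hκv⟩, hmin⟩ := (measure fun κ : ι → ℝ => #{j | κ j ≠ 0}).wf.has_min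
    {κ | 0 ≤ κ ∧ ∑ j, κ j • v j = ∑ j, μ j • v j} ⟨μ, hμ, rfl⟩
  set s : Finset ι := {j | κ j ≠ 0}
  refine ⟨s, ?_, fun j => κ j, fun j => hκ j, ?_⟩
  · by_contra hdep
    obtain ⟨g, hg, j, hj⟩ := Fintype.not_linearIndependent_iff.mp hdep
    let ν : ι → ℝ := fun j => if h : j ∈ s then g ⟨j, h⟩ else 0
    have hνv : ∑ j, ν j • v j = 0 := by
      rw [← hg, ← s.sum_coe_sort_eq_sum_of_eq_zero _ fun j hj => by simp [ν, hj]]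
      exact Finset.sum_congr rfl fun j _ => by simp [ν]
    have hν : ν ≠ 0 := fun h => hj (by simpa [ν] using congrFun h j)
    obtain ⟨r, hr, hlt⟩ := exists_nonneg_sub_smul_card_support_lt hκ
      (fun j hj => by simp [ν, s, hj]) hν
    refine hmin _ ⟨hr, ?_⟩ hlt
    simp only [Pi.sub_apply, Pi.smul_apply, smul_eq_mul, sub_smul, mul_smul,
      Finset.sum_sub_distrib, ← Finset.smul_sum, hνv, smul_zero, sub_zero, hκv]
  · refine (s.sum_coe_sort_eq_sum_of_eq_zero (fun j => κ j • v j) fun j hj => ?_).trans hκv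
    simp [show κ j = 0 by simpa [s] using hj]

variable [TopologicalSpace E] [IsTopologicalAddGroup E] [ContinuousSMul ℝ E] [T2Space E]

theorem isClosed_linearCombination_image_Ici (v : ι → E) :
    IsClosed (Fintype.linearCombination ℝ v '' Set.Ici 0) := by
  classical
  have hunion : Fintype.linearCombination ℝ v '' Set.Ici 0 =
      ⋃ (s : Finset ι) (_ : LinearIndependent ℝ (fun j : s => v j)),
        Fintype.linearCombination ℝ (fun j : s => v j) '' Set.Ici 0 := by
    ext x
    simp only [Set.mem_iUnion, Set.mem_image, Set.mem_Ici, Fintype.linearCombination_apply]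
    constructor
    · rintro ⟨μ, hμ, rfl⟩
      obtain ⟨s, hs, hκ⟩ := exists_linearIndependent_nonneg_sum_eq v hμ
      exact ⟨s, hs, hκ⟩
    · rintro ⟨s, -, κ, hκ, rfl⟩
      refine ⟨fun j => if h : j ∈ s then κ ⟨j, h⟩ else 0, fun j => ?_, ?_⟩
      · dsimp only
        split_ifs
        exacts [hκ _, le_rfl]
      · rw [← s.sum_coe_sort_eq_sum_of_eq_zero _ fun j hj => by simp [hj]]
        simp
  rw [hunion]
  refine isClosed_iUnion_of_finite fun s => isClosed_iUnion_of_finite fun hs => ?_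
  rw [linearIndependent_iff_injective_fintypeLinearCombination] at hs
  exact (LinearMap.isClosedEmbedding_of_injective (LinearMap.ker_eq_bot.mpr hs)).isClosedMap _
    isClosed_Ici

end ConicalCombination

/-- Farkas' lemma. -/
theorem Matrix.exists_nonneg_transpose_mulVec_eq {m n : Type*} [Fintype m] [Fintype n]
    (B : Matrix m n ℝ) (w : n → ℝ) (h : ∀ d, B *ᵥ d ≤ 0 → w ⬝ᵥ d ≤ 0) :
    ∃ μ, 0 ≤ μ ∧ Bᵀ *ᵥ μ = w := by
  classical
  set L := Fintype.linearCombination ℝ fun j => B j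
  have hL : ∀ μ, L μ = Bᵀ *ᵥ μ := fun μ => by
    rw [Fintype.linearCombination_apply, mulVec_transpose, vecMul_eq_sum]
  by_contra! hw
  have hwC : w ∉ L '' Set.Ici 0 := fun ⟨μ, hμ, hμw⟩ => hw μ hμ (by rw [← hL, hμw])
  obtain ⟨f, u, hfC, hfw⟩ := geometric_hahn_banach_closed_point
    ((convex_Ici 0).linear_image L) (isClosed_linearCombination_image_Ici _) hwC
  have hu : 0 < u := by simpa using hfC 0 ⟨0, Set.mem_Ici.mpr le_rfl, map_zero L⟩
  set d : n → ℝ := fun k => f (Pi.single k 1)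
  have hf : ∀ x, f x = d ⬝ᵥ x := fun x => by
    conv_lhs => rw [pi_eq_sum_univ' x]
    simp [d, dotProduct, mul_comm]
  refine (h d fun j => ?_).not_gt (hu.trans (by rwa [hf, dotProduct_comm] at hfw))
  by_contra! hj
  have hBj : 0 < f (B j) := by rw [hf, dotProduct_comm]; exact hj
  have := hfC ((u / f (B j)) • B j)
    ⟨(u / f (B j)) • Pi.single j 1,
      Set.mem_Ici.mpr (smul_nonneg (div_pos hu hBj).le (Pi.single_nonneg.mpr zero_le_one)),
      by simp [L]⟩
  rw [map_smul, smul_eq_mul, div_mul_cancel₀ _ hBj.ne'] at this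
  exact this.false

theorem Matrix.IsSymm.dotProduct_mulVec_comm {n : Type*} [Fintype n] {Q : Matrix n n ℝ}
    (hQ : Q.IsSymm) (x y : n → ℝ) : x ⬝ᵥ Q *ᵥ y = y ⬝ᵥ Q *ᵥ x := by
  rw [dotProduct_mulVec, ← mulVec_transpose, hQ, dotProduct_comm]

theorem Matrix.dotProduct_nonpos_of_nonneg_of_nonpos {m : Type*} [Fintype m] {μ v : m → ℝ}
    (hμ : 0 ≤ μ) (hv : v ≤ 0) : μ ⬝ᵥ v ≤ 0 := by
  simpa [dotProduct_neg] using dotProduct_nonneg_of_nonneg hμ (neg_nonneg.mpr hv)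

theorem ConvexOn.add_mul_sub_le_of_eventually {s : Set ℝ} {f : ℝ → ℝ}
    (hf : ConvexOn ℝ s f) {a g : ℝ} (ha : a ∈ s) (h : ∀ᶠ t in 𝓝 a, f a + g * (t - a) ≤ f t)
    {t : ℝ} (ht : t ∈ s) : f a + g * (t - a) ≤ f t := by
  have hψ : ConvexOn ℝ s fun t => f t - g * (t - a) := by
    refine ⟨hf.1, fun x hx y hy α β hα hβ hαβ => ?_⟩
    have := hf.2 hx hy hα hβ hαβ
    simp only [smul_eq_mul] at this ⊢
    linear_combination this - g * a * hαβ
  have hloc : IsLocalMinOn (fun t => f t - g * (t - a)) s a := by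
    filter_upwards [h.filter_mono nhdsWithin_le_nhds] with t ht
    simp only [sub_self, mul_zero, sub_zero]
    linarith
  have hmin := IsMinOn.of_isLocalMinOn_of_convexOn ha hloc hψ ht
  simp only [sub_self, mul_zero, sub_zero, Set.mem_ofPred_eq] at hmin
  linarith

namespace LCQP

section Primal

variable {m n : Type*} [Fintype n]

def objective (Q : Matrix n n ℝ) (c ν : n → ℝ) : ℝ := ν ⬝ᵥ Q *ᵥ ν + c ⬝ᵥ ν

def feasibleSet (A : Matrix m n ℝ) (b : m → ℝ) : Set (n → ℝ) := {ν | A *ᵥ ν + b ≤ 0}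

def IsValueFunction (Q : Matrix n n ℝ) (c : n → ℝ) (A : Matrix m n ℝ) (V : (m → ℝ) → ℝ) :
    Prop :=
  ∀ b, (feasibleSet A b).Nonempty → IsLeast (objective Q c '' feasibleSet A b) (V b)

structure IsKKTPair [Fintype m] (Q : Matrix n n ℝ) (c : n → ℝ) (A : Matrix m n ℝ) (b : m → ℝ)
    (ν : n → ℝ) (μ : m → ℝ) : Prop where
  feasible : ν ∈ feasibleSet A b
  nonneg : 0 ≤ μ
  complementary : μ ⬝ᵥ (A *ᵥ ν + b) = 0
  stationary : (2 : ℝ) • Q *ᵥ ν + c + Aᵀ *ᵥ μ = 0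

variable {Q : Matrix n n ℝ} {c : n → ℝ} {A : Matrix m n ℝ} {b : m → ℝ}

theorem objective_add_smul (hQs : Q.IsSymm) (c x d : n → ℝ) (θ : ℝ) :
    objective Q c (x + θ • d) =
      objective Q c x + θ * (((2 : ℝ) • Q *ᵥ x + c) ⬝ᵥ d) + θ ^ 2 * (d ⬝ᵥ Q *ᵥ d) := by
  simp only [objective, mulVec_add, mulVec_smul, dotProduct_add, add_dotProduct, dotProduct_smul,
    smul_dotProduct, smul_eq_mul, hQs.dotProduct_mulVec_comm d x, dotProduct_comm (Q *ᵥ x) d]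
  ring

theorem convexOn_objective (hQ : Q.PosSemidef) (c : n → ℝ) :
    ConvexOn ℝ Set.univ (objective Q c) := by
  have hQs : Q.IsSymm := isHermitian_iff_isSymm.mp hQ.isHermitian
  refine ⟨convex_univ, fun x _ y _ a b ha hb hab => ?_⟩
  have hq : 0 ≤ (y - x) ⬝ᵥ Q *ᵥ (y - x) := by
    simpa using hQ.dotProduct_mulVec_nonneg (y - x)
  have hy := objective_add_smul hQs c x (y - x) 1
  obtain rfl : a = 1 - b := by linarith
  rw [show (1 - b) • x + b • y = x + b • (y - x) by module, objective_add_smul hQs,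
    smul_eq_mul, smul_eq_mul]
  rw [one_smul, add_sub_cancel, one_mul, one_pow, one_mul] at hy
  nlinarith [mul_nonneg (mul_nonneg hb ha) hq]

theorem mem_feasibleSet_add_smul_single [DecidableEq m] {i : m} {t : ℝ} {y : n → ℝ} :
    y ∈ feasibleSet A (b + t • Pi.single i 1) ↔
      (A *ᵥ y + b) i + t ≤ 0 ∧ ∀ j ≠ i, (A *ᵥ y + b) j ≤ 0 := by
  simp only [feasibleSet, Set.mem_ofPred_eq, Pi.le_def, Pi.add_apply, Pi.smul_apply,
    Pi.zero_apply, smul_eq_mul, ← add_assoc]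
  constructor
  · intro h
    exact ⟨by simpa using h i, fun j hj => by simpa [hj] using h j⟩
  · rintro ⟨hi, hj⟩ j
    by_cases hji : j = i
    · subst hji
      simpa using hi
    · simpa [hji] using hj j hji

theorem dotProduct_nonneg_of_isMinOn (hQs : Q.IsSymm) (K : Finset m) {x : n → ℝ}
    (hx : x ∈ {y | ∀ j ∈ K, (A *ᵥ y + b) j ≤ 0})
    (hmin : IsMinOn (objective Q c) {y | ∀ j ∈ K, (A *ᵥ y + b) j ≤ 0} x) {d : n → ℝ}
    (hd : ∀ j ∈ K, (A *ᵥ x + b) j = 0 → (A *ᵥ d) j ≤ 0) :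
    0 ≤ ((2 : ℝ) • Q *ᵥ x + c) ⬝ᵥ d := by
  by_contra! hneg
  have affine_tendsto (a s : ℝ) : Tendsto (fun θ : ℝ => a + θ * s) (𝓝[>] 0) (𝓝 a) := by
    have : Continuous fun θ : ℝ => a + θ * s := by fun_prop
    exact (this.tendsto' 0 a (by simp)).mono_left nhdsWithin_le_nhds
  have hfeas : ∀ᶠ θ in 𝓝[>] (0 : ℝ), ∀ j ∈ K, (A *ᵥ (x + θ • d) + b) j ≤ 0 := by
    rw [eventually_all_finset]
    intro j hj
    have hexp : ∀ θ : ℝ, (A *ᵥ (x + θ • d) + b) j = (A *ᵥ x + b) j + θ * (A *ᵥ d) j := by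
      intro θ
      simp only [mulVec_add, mulVec_smul, Pi.add_apply, Pi.smul_apply, smul_eq_mul]
      ring
    rcases (hx j hj).eq_or_lt with hact | hslack
    · filter_upwards [self_mem_nhdsWithin] with θ (hθ : 0 < θ)
      rw [hexp, hact]
      nlinarith [hd j hj hact]
    · filter_upwards [(affine_tendsto _ _).eventually_lt_const hslack] with θ hθ
      exact (hexp θ).trans_le hθ.le
  have hdesc : ∀ᶠ θ in 𝓝[>] (0 : ℝ), objective Q c (x + θ • d) < objective Q c x := by
    filter_upwards [(affine_tendsto (((2 : ℝ) • Q *ᵥ x + c) ⬝ᵥ d) (d ⬝ᵥ Q *ᵥ d)).eventually_lt_const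
      hneg, self_mem_nhdsWithin] with θ hθ (hθpos : 0 < θ)
    rw [objective_add_smul hQs]
    nlinarith
  obtain ⟨θ, hθfeas, hθlt⟩ := (hfeas.and hdesc).exists
  exact (hmin hθfeas).not_gt hθlt

theorem nonneg_and_mul_eq_zero_of_forall_le [DecidableEq m] {x : n → ℝ}
    (hx : x ∈ feasibleSet A b) {i : m} {g : ℝ}
    (hg : ∀ t y, y ∈ feasibleSet A (b + t • Pi.single i 1) →
      objective Q c x + g * t ≤ objective Q c y) :
    0 ≤ g ∧ g * (A *ᵥ x + b) i = 0 := by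
  have hxi : (A *ᵥ x + b) i ≤ 0 := hx i
  have hxt : ∀ t, t ≤ -(A *ᵥ x + b) i → x ∈ feasibleSet A (b + t • Pi.single i 1) :=
    fun t ht => mem_feasibleSet_add_smul_single.mpr ⟨by linarith, fun j _ => hx j⟩
  have h₁ := hg _ x (hxt _ le_rfl)
  have h₂ := hg ((A *ᵥ x + b) i - 1) x (hxt _ (by linarith))
  constructor <;> nlinarith

theorem IsValueFunction.le_objective {V : (m → ℝ) → ℝ} (hV : IsValueFunction Q c A V)
    {y : n → ℝ} (hy : y ∈ feasibleSet A b) : V b ≤ objective Q c y :=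
  (hV b ⟨y, hy⟩).2 ⟨y, hy, rfl⟩

theorem IsValueFunction.convexOn (hQ : Q.PosSemidef) {V : (m → ℝ) → ℝ}
    (hV : IsValueFunction Q c A V) : ConvexOn ℝ {b | (feasibleSet A b).Nonempty} V := by
  have hmem : ∀ ⦃b₁ b₂ : m → ℝ⦄ ⦃y₁ y₂ : n → ℝ⦄ ⦃a₁ a₂ : ℝ⦄, 0 ≤ a₁ → 0 ≤ a₂ →
      y₁ ∈ feasibleSet A b₁ → y₂ ∈ feasibleSet A b₂ →
      a₁ • y₁ + a₂ • y₂ ∈ feasibleSet A (a₁ • b₁ + a₂ • b₂) := by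
    intro b₁ b₂ y₁ y₂ a₁ a₂ ha₁ ha₂ hy₁ hy₂
    have : A *ᵥ (a₁ • y₁ + a₂ • y₂) + (a₁ • b₁ + a₂ • b₂) =
        a₁ • (A *ᵥ y₁ + b₁) + a₂ • (A *ᵥ y₂ + b₂) := by
      rw [mulVec_add, mulVec_smul, mulVec_smul]
      module
    change A *ᵥ _ + _ ≤ 0
    rw [this]
    exact add_nonpos (smul_nonpos_of_nonneg_of_nonpos ha₁ hy₁)
      (smul_nonpos_of_nonneg_of_nonpos ha₂ hy₂)
  refine ⟨fun b₁ ⟨y₁, hy₁⟩ b₂ ⟨y₂, hy₂⟩ a₁ a₂ ha₁ ha₂ _ => ⟨_, hmem ha₁ ha₂ hy₁ hy₂⟩,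
    fun b₁ hb₁ b₂ hb₂ a₁ a₂ ha₁ ha₂ hsum => ?_⟩
  obtain ⟨y₁, hy₁, hV₁⟩ := (hV b₁ hb₁).1
  obtain ⟨y₂, hy₂, hV₂⟩ := (hV b₂ hb₂).1
  rw [← hV₁, ← hV₂]
  exact (hV.le_objective (hmem ha₁ ha₂ hy₁ hy₂)).trans
    ((convexOn_objective hQ c).2 trivial trivial ha₁ ha₂ hsum)

theorem IsValueFunction.convexOn_add_smul (hQ : Q.PosSemidef) {V : (m → ℝ) → ℝ}
    (hV : IsValueFunction Q c A V) (b e : m → ℝ) :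
    ConvexOn ℝ {t : ℝ | (feasibleSet A (b + t • e)).Nonempty} fun t => V (b + t • e) := by
  have hline : ∀ t : ℝ, AffineMap.lineMap b (b + e) t = b + t • e := fun t => by
    rw [AffineMap.lineMap_apply, vsub_eq_sub, vadd_eq_add, add_sub_cancel_left, add_comm]
  simpa only [Set.preimage_ofPred_eq, Function.comp_def, hline] using
    (hV.convexOn hQ).comp_affineMap (AffineMap.lineMap b (b + e))

variable [Fintype m]

theorem exists_lagrange_multipliers (hQs : Q.IsSymm) (K : Finset m) {x : n → ℝ}
    (hx : x ∈ {y | ∀ j ∈ K, (A *ᵥ y + b) j ≤ 0})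
    (hmin : IsMinOn (objective Q c) {y | ∀ j ∈ K, (A *ᵥ y + b) j ≤ 0} x) :
    ∃ μ : m → ℝ, 0 ≤ μ ∧ (∀ j ∉ K, μ j = 0) ∧ μ ⬝ᵥ (A *ᵥ x + b) = 0 ∧
      (2 : ℝ) • Q *ᵥ x + c + Aᵀ *ᵥ μ = 0 := by
  classical
  set s := A *ᵥ x + b
  set ε : m → ℝ := fun j => if j ∈ K ∧ s j = 0 then 1 else 0
  have hε : ∀ j, ε j = 0 ∨ (j ∈ K ∧ s j = 0 ∧ ε j = 1) := fun j => by
    by_cases h : j ∈ K ∧ s j = 0 <;> simp [ε, h]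
  -- the rows of `diagonal ε * A` are those of the active constraints, the others are zero
  obtain ⟨lam, hlam, hlamw⟩ := (diagonal ε * A).exists_nonneg_transpose_mulVec_eq
    (-((2 : ℝ) • Q *ᵥ x + c)) fun d hd => by
      have := dotProduct_nonneg_of_isMinOn hQs K hx hmin (d := d) fun j hj (hact : s j = 0) => by
        simpa [← mulVec_mulVec, mulVec_diagonal, ε, hj, hact] using hd j
      rw [neg_dotProduct]
      linarith
  refine ⟨diagonal ε *ᵥ lam, fun j => ?_, fun j hj => ?_, ?_, ?_⟩
  · rcases hε j with h | ⟨-, -, h⟩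
    · simp [mulVec_diagonal, h]
    · simpa [mulVec_diagonal, h] using hlam j
  · rcases hε j with h | ⟨hj', -, -⟩
    · simp [mulVec_diagonal, h]
    · exact absurd hj' hj
  · refine Finset.sum_eq_zero fun j _ => ?_
    rcases hε j with h | ⟨-, hact, -⟩
    · simp [mulVec_diagonal, h]
    · simp [hact]
  · rw [transpose_mul, diagonal_transpose, ← mulVec_mulVec] at hlamw
    rw [hlamw, add_neg_cancel]

theorem exists_isKKTPair (hQs : Q.IsSymm) {x : n → ℝ} (hx : x ∈ feasibleSet A b)
    (hmin : IsMinOn (objective Q c) (feasibleSet A b) x) : ∃ μ, IsKKTPair Q c A b x μ := by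
  have hS : {y | ∀ j ∈ (univ : Finset m), (A *ᵥ y + b) j ≤ 0} = feasibleSet A b := by
    ext y
    simp [feasibleSet, Pi.le_def]
  obtain ⟨μ, hμ, -, hcompl, hstat⟩ := exists_lagrange_multipliers hQs univ (hS ▸ hx) (hS ▸ hmin)
  exact ⟨μ, hx, hμ, hcompl, hstat⟩

theorem exists_isKKTPair_apply_eq_of_forall_le [DecidableEq m] (hQs : Q.IsSymm) {x : n → ℝ}
    (hx : x ∈ feasibleSet A b) {i : m} {g : ℝ}
    (hg : ∀ t y, y ∈ feasibleSet A (b + t • Pi.single i 1) →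
      objective Q c x + g * t ≤ objective Q c y) :
    ∃ μ, IsKKTPair Q c A b x μ ∧ μ i = g := by
  obtain ⟨hg₀, hgs⟩ := nonneg_and_mul_eq_zero_of_forall_le hx hg
  -- `x` minimizes the objective with the `i`-th constraint moved into the cost, weighted by `g`
  set c' := c + g • Aᵀ *ᵥ Pi.single i 1
  have hobj : ∀ y, objective Q c' y = objective Q c y + g * (A *ᵥ y) i := fun y => by
    rw [objective, objective, add_dotProduct, smul_dotProduct, dotProduct_comm (Aᵀ *ᵥ _),
      dotProduct_mulVec y Aᵀ, vecMul_transpose, dotProduct_single, mul_one, smul_eq_mul,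
      add_assoc]
  obtain ⟨lam, hlam, hlami, hcompl, hstat⟩ := exists_lagrange_multipliers (c := c') hQs
    (univ.erase i) (x := x) (fun j _ => hx j) <| isMinOn_iff.mpr fun y hy => by
      have := hg (-(A *ᵥ y + b) i) y (mem_feasibleSet_add_smul_single.mpr
        ⟨by linarith, fun j hj => hy j (by simpa using hj)⟩)
      rw [hobj, hobj]
      have hAx : (A *ᵥ x + b) i = (A *ᵥ x) i + b i := rfl
      have hAy : (A *ᵥ y + b) i = (A *ᵥ y) i + b i := rfl
      rw [hAy, mul_neg, mul_add] at this
      rw [hAx, mul_add] at hgs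
      linarith
  refine ⟨lam + g • Pi.single i 1, ⟨hx, ?_, ?_, ?_⟩, ?_⟩
  · exact add_nonneg hlam (smul_nonneg hg₀ (Pi.single_nonneg.mpr zero_le_one))
  · rw [add_dotProduct, hcompl, smul_dotProduct, single_dotProduct, one_mul, smul_eq_mul,
      zero_add]
    exact hgs
  · rw [← hstat, mulVec_add, mulVec_smul]
    simp only [c']
    abel
  · simp [hlami i (by simp)]

theorem IsValueFunction.exists_isKKTPair_apply_eq [DecidableEq m] (hQ : Q.PosSemidef)
    {V : (m → ℝ) → ℝ} (hV : IsValueFunction Q c A V) {x : n → ℝ} (hx : x ∈ feasibleSet A b)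
    (hxV : objective Q c x = V b) {i : m} {g δ : ℝ} (hδ : 0 < δ)
    (hg : ∀ t ∈ Set.Ioo (-δ) δ, V b + g * t ≤ V (b + t • Pi.single i 1)) :
    ∃ μ, IsKKTPair Q c A b x μ ∧ μ i = g := by
  refine exists_isKKTPair_apply_eq_of_forall_le (isHermitian_iff_isSymm.mp hQ.isHermitian) hx
    fun t y hy => ?_
  have hlocal : ∀ᶠ t in 𝓝 0, V (b + (0 : ℝ) • Pi.single i 1) + g * (t - 0) ≤
      V (b + t • Pi.single i 1) := by
    filter_upwards [Ioo_mem_nhds (neg_neg_of_pos hδ) hδ] with t ht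
    simpa using hg t ht
  have := (hV.convexOn_add_smul hQ b _).add_mul_sub_le_of_eventually ⟨x, by simpa using hx⟩
    hlocal ⟨y, hy⟩
  simp only [zero_smul, add_zero, sub_zero] at this
  linarith [hV.le_objective hy]

end Primal

section Dual

variable {m n : Type*} [Fintype m] [Fintype n] [DecidableEq n]

/-- The paper's `h(μ; b)`: the Lagrange dual function is `-h(μ; b) - cᵀ Q⁻¹ c / 4`. -/
noncomputable def dualObjective (Q : Matrix n n ℝ) (c : n → ℝ) (A : Matrix m n ℝ)
    (μ b : m → ℝ) : ℝ :=
  (1 / 4) * (μ ⬝ᵥ (A * Q⁻¹ * Aᵀ) *ᵥ μ) + (1 / 2) * (((A * Q⁻¹) *ᵥ c - (2 : ℝ) • b) ⬝ᵥ μ)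

variable {Q : Matrix n n ℝ} {c : n → ℝ} {A : Matrix m n ℝ} {b : m → ℝ} {ν : n → ℝ} {μ : m → ℝ}

/-- Completing the square in the Lagrangian `objective + μ ⬝ (A ν + b)` with respect to `ν`. -/
theorem objective_add_dotProduct_add_dualObjective (hQs : Q.IsSymm) (hQu : IsUnit Q)
    (c : n → ℝ) (A : Matrix m n ℝ) (b : m → ℝ) (ν : n → ℝ) (μ : m → ℝ) :
    objective Q c ν + μ ⬝ᵥ (A *ᵥ ν + b) + dualObjective Q c A μ b +
        (1 / 4) * (c ⬝ᵥ Q⁻¹ *ᵥ c) =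
      (1 / 4) * (((2 : ℝ) • Q *ᵥ ν + c + Aᵀ *ᵥ μ) ⬝ᵥ
        Q⁻¹ *ᵥ ((2 : ℝ) • Q *ᵥ ν + c + Aᵀ *ᵥ μ)) := by
  have hQinv : Q⁻¹.IsSymm := by rw [IsSymm, transpose_nonsing_inv, hQs]
  have hcancel : Q⁻¹ *ᵥ (Q *ᵥ ν) = ν := by
    rw [mulVec_mulVec, nonsing_inv_mul Q ((isUnit_iff_isUnit_det Q).mp hQu), one_mulVec]
  have hAt : ∀ z, μ ⬝ᵥ A *ᵥ z = Aᵀ *ᵥ μ ⬝ᵥ z := fun z => by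
    rw [dotProduct_mulVec, mulVec_transpose]
  unfold objective dualObjective
  rw [← mulVec_mulVec, ← mulVec_mulVec, ← mulVec_mulVec, hAt, sub_dotProduct,
    dotProduct_comm (A *ᵥ _), hAt]
  simp only [mulVec_add, mulVec_smul, hcancel, dotProduct_add, add_dotProduct, dotProduct_smul,
    smul_dotProduct, smul_eq_mul]
  rw [hQinv.dotProduct_mulVec_comm (Q *ᵥ ν), hcancel, hQinv.dotProduct_mulVec_comm (Q *ᵥ ν),
    hcancel, hQinv.dotProduct_mulVec_comm (Aᵀ *ᵥ μ) c, dotProduct_comm (Q *ᵥ ν) ν,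
    dotProduct_comm b μ, hAt ν]
  ring

theorem weak_duality (hQ : Q.PosDef) (hν : ν ∈ feasibleSet A b) (hμ : 0 ≤ μ) :
    -(1 / 4) * (c ⬝ᵥ Q⁻¹ *ᵥ c) ≤ objective Q c ν + dualObjective Q c A μ b := by
  have key := objective_add_dotProduct_add_dualObjective
    (isHermitian_iff_isSymm.mp hQ.isHermitian) hQ.isUnit c A b ν μ
  have hres := hQ.inv.posSemidef.dotProduct_mulVec_nonneg ((2 : ℝ) • Q *ᵥ ν + c + Aᵀ *ᵥ μ)
  have hcompl := dotProduct_nonpos_of_nonneg_of_nonpos hμ hν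
  simp only [star_trivial] at hres
  linarith

theorem IsKKTPair.objective_add_dualObjective (hQ : Q.PosDef) (h : IsKKTPair Q c A b ν μ) :
    objective Q c ν + dualObjective Q c A μ b = -(1 / 4) * (c ⬝ᵥ Q⁻¹ *ᵥ c) := by
  have key := objective_add_dotProduct_add_dualObjective
    (isHermitian_iff_isSymm.mp hQ.isHermitian) hQ.isUnit c A b ν μ
  rw [h.complementary, h.stationary, zero_dotProduct] at key
  linarith

theorem isKKTPair_of_objective_add_dualObjective_le (hQ : Q.PosDef)
    (hν : ν ∈ feasibleSet A b) (hμ : 0 ≤ μ)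
    (h : objective Q c ν + dualObjective Q c A μ b ≤ -(1 / 4) * (c ⬝ᵥ Q⁻¹ *ᵥ c)) :
    IsKKTPair Q c A b ν μ := by
  set r := (2 : ℝ) • Q *ᵥ ν + c + Aᵀ *ᵥ μ
  have key := objective_add_dotProduct_add_dualObjective
    (isHermitian_iff_isSymm.mp hQ.isHermitian) hQ.isUnit c A b ν μ
  have hres := hQ.inv.posSemidef.dotProduct_mulVec_nonneg r
  have hcompl := dotProduct_nonpos_of_nonneg_of_nonpos hμ hν
  simp only [star_trivial] at hres
  refine ⟨hν, hμ, by linarith, ?_⟩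
  by_contra hr
  have := hQ.inv.dotProduct_mulVec_pos hr
  simp only [star_trivial] at this
  linarith

theorem IsKKTPair.isKKTPair_iff (hQ : Q.PosDef) {μ₀ : m → ℝ} (h₀ : IsKKTPair Q c A b ν μ₀) :
    IsKKTPair Q c A b ν μ ↔
      0 ≤ μ ∧ ∀ μ', 0 ≤ μ' → dualObjective Q c A μ b ≤ dualObjective Q c A μ' b := by
  constructor
  · intro h
    refine ⟨h.nonneg, fun μ' hμ' => ?_⟩
    linarith [h.objective_add_dualObjective hQ, weak_duality (c := c) hQ h.feasible hμ']
  · rintro ⟨hμ, hmin⟩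
    refine isKKTPair_of_objective_add_dualObjective_le hQ h₀.feasible hμ ?_
    linarith [hmin μ₀ h₀.nonneg, h₀.objective_add_dualObjective hQ]

theorem dualObjective_sub_dualObjective (μ b b' : m → ℝ) :
    dualObjective Q c A μ b - dualObjective Q c A μ b' = μ ⬝ᵥ (b' - b) := by
  simp only [dualObjective, sub_dotProduct, smul_dotProduct, smul_eq_mul, dotProduct_comm μ]
  ring

theorem IsKKTPair.objective_add_dotProduct_sub_le (hQ : Q.PosDef)
    (h : IsKKTPair Q c A b ν μ) {b' : m → ℝ} {y : n → ℝ} (hy : y ∈ feasibleSet A b') :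
    objective Q c ν + μ ⬝ᵥ (b' - b) ≤ objective Q c y := by
  linarith [weak_duality (c := c) hQ hy h.nonneg, h.objective_add_dualObjective hQ,
    dualObjective_sub_dualObjective (Q := Q) (c := c) (A := A) μ b b']

theorem IsKKTPair.objective_add_mul_le [DecidableEq m] (hQ : Q.PosDef)
    (h : IsKKTPair Q c A b ν μ) {i : m} {t : ℝ} {y : n → ℝ}
    (hy : y ∈ feasibleSet A (b + t • Pi.single i 1)) :
    objective Q c ν + μ i * t ≤ objective Q c y := by
  simpa [dotProduct_smul, dotProduct_single, mul_comm] using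
    h.objective_add_dotProduct_sub_le hQ hy

theorem IsValueFunction.add_mul_le_of_isKKTPair [DecidableEq m] (hQ : Q.PosDef)
    {V : (m → ℝ) → ℝ} (hV : IsValueFunction Q c A V) (h : IsKKTPair Q c A b ν μ)
    (hνV : objective Q c ν = V b) {i : m} {t : ℝ}
    (ht : (feasibleSet A (b + t • Pi.single i 1)).Nonempty) :
    V b + μ i * t ≤ V (b + t • Pi.single i 1) := by
  obtain ⟨y, hy, hyV⟩ := (hV _ ht).1
  rw [← hνV, ← hyV]
  exact h.objective_add_mul_le hQ hy

end Dual

end LCQP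

open LCQP

theorem lcqp_value_subdifferential_constraint_constant_general
    (N M : ℕ)
    (Q : Matrix (Fin N) (Fin N) ℝ) (hQsymm : Q.IsSymm) (hQpd : Q.PosDef)
    (c : Fin N → ℝ) (A : Matrix (Fin M) (Fin N) ℝ)
    (Ω : (Fin M → ℝ) → Set (Fin N → ℝ))
    (hΩ : ∀ b, Ω b = {ν | ∀ i, A.mulVec ν i + b i ≤ 0})
    (V : (Fin M → ℝ) → ℝ)
    (hV : ∀ b, (Ω b).Nonempty →
      IsLeast ((fun ν => ν ⬝ᵥ Q.mulVec ν + c ⬝ᵥ ν) '' Ω b) (V b))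
    (h : (Fin M → ℝ) → (Fin M → ℝ) → ℝ)
    (hh : ∀ μ b, h μ b = (1 / 4) * (μ ⬝ᵥ (A * Q⁻¹ * Aᵀ).mulVec μ) +
      (1 / 2) * (((A * Q⁻¹).mulVec c - (2 : ℝ) • b) ⬝ᵥ μ))
    (b : Fin M → ℝ) (i : Fin M)
    (νbar : Fin N → ℝ) (hνbar : νbar ∈ Ω b)
    (hstrict : A.mulVec νbar i + b i < 0) :
    ∃ δ : ℝ, 0 < δ ∧
      (∀ t : ℝ, |t| < δ → (Ω (b + t • (Pi.single i 1 : Fin M → ℝ))).Nonempty) ∧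
      ConvexOn ℝ (Set.Ioo (-δ) δ) (fun t => V (b + t • (Pi.single i 1 : Fin M → ℝ))) ∧
      ({g : ℝ | ∀ t ∈ Set.Ioo (-δ) δ,
          V b + g * t ≤ V (b + t • (Pi.single i 1 : Fin M → ℝ))} =
        {x : ℝ | ∃ μstar : Fin M → ℝ, 0 ≤ μstar ∧
          (∀ μ : Fin M → ℝ, 0 ≤ μ → h μstar b ≤ h μ b) ∧ μstar i = x}) ∧
      ({x : ℝ | ∃ μstar : Fin M → ℝ, 0 ≤ μstar ∧
          (∀ μ : Fin M → ℝ, 0 ≤ μ → h μstar b ≤ h μ b) ∧ μstar i = x}).Nonempty ∧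
      Bornology.IsBounded {x : ℝ | ∃ μstar : Fin M → ℝ, 0 ≤ μstar ∧
          (∀ μ : Fin M → ℝ, 0 ≤ μ → h μstar b ≤ h μ b) ∧ μstar i = x} := by
  obtain rfl : Ω = feasibleSet A := funext hΩ
  obtain rfl : h = dualObjective Q c A := funext₂ hh
  replace hV : IsValueFunction Q c A V := hV
  set δ := -(A *ᵥ νbar + b) i
  have hδ : 0 < δ := neg_pos.mpr hstrict
  have hfeas : ∀ t ≤ δ, (feasibleSet A (b + t • Pi.single i 1)).Nonempty := fun t ht =>
    ⟨νbar, mem_feasibleSet_add_smul_single.mpr ⟨by linarith, fun j _ => hνbar j⟩⟩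
  obtain ⟨x, hx, hxV⟩ := (hV b ⟨νbar, hνbar⟩).1
  obtain ⟨μ₀, hμ₀⟩ :=
    exists_isKKTPair hQsymm hx (isMinOn_iff.mpr fun y hy => hxV ▸ hV.le_objective hy)
  have hdual : ∀ g, (∃ μ, 0 ≤ μ ∧ (∀ μ', 0 ≤ μ' →
      dualObjective Q c A μ b ≤ dualObjective Q c A μ' b) ∧ μ i = g) ↔
      ∃ μ, IsKKTPair Q c A b x μ ∧ μ i = g := fun g => by
    simp only [hμ₀.isKKTPair_iff hQpd, and_assoc]
  simp only [hdual]
  refine ⟨δ, hδ, fun t ht => hfeas t (abs_lt.mp ht).2.le,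
    (hV.convexOn_add_smul hQpd.posSemidef b _).subset (fun t ht => hfeas t ht.2.le)
      (convex_Ioo _ _),
    Set.ext fun g => ⟨fun hg => hV.exists_isKKTPair_apply_eq hQpd.posSemidef hx hxV hδ hg,
      fun ⟨μ, hμ, hμg⟩ t ht => hμg ▸ hV.add_mul_le_of_isKKTPair hQpd hμ hxV (hfeas t ht.2.le)⟩,
    ⟨μ₀ i, μ₀, hμ₀, rfl⟩, ?_⟩
  refine (Metric.isBounded_Icc 0 ((V (b + δ • Pi.single i 1) - V b) / δ)).subset ?_
  rintro _ ⟨μ, hμ, rfl⟩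
  refine ⟨hμ.nonneg i, (le_div_iff₀ hδ).mpr ?_⟩
  linarith [hV.add_mul_le_of_isKKTPair hQpd hμ hxV (hfeas δ le_rfl)]

/-- Under strict feasibility of the `i`-th constraint, the optimal
value of the regularized LCQP, as a function of a perturbation `t` of the
`i`-th constraint constant, is finite and convex near `t = 0`, and its convex
subdifferential at `0` is exactly the (nonempty and bounded) set of `i`-th
components of optimal dual solutions. -/
theorem lcqp_value_subdifferential_constraint_constant
    (N M : ℕ) (hN : 0 < N) (hM : 0 < M)
    (Q : Matrix (Fin N) (Fin N) ℝ) (hQsymm : Q.IsSymm) (hQpd : Q.PosDef)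
    (c : Fin N → ℝ) (A : Matrix (Fin M) (Fin N) ℝ)
    (Ω : (Fin M → ℝ) → Set (Fin N → ℝ))
    (hΩ : ∀ b, Ω b = {ν | ∀ i, A.mulVec ν i + b i ≤ 0})
    (V : (Fin M → ℝ) → ℝ)
    (hV : ∀ b, (Ω b).Nonempty →
      IsLeast ((fun ν => ν ⬝ᵥ Q.mulVec ν + c ⬝ᵥ ν) '' Ω b) (V b))
    (h : (Fin M → ℝ) → (Fin M → ℝ) → ℝ)
    (hh : ∀ μ b, h μ b = (1 / 4) * (μ ⬝ᵥ (A * Q⁻¹ * Aᵀ).mulVec μ) +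
      (1 / 2) * (((A * Q⁻¹).mulVec c - (2 : ℝ) • b) ⬝ᵥ μ))
    (b : Fin M → ℝ) (i : Fin M)
    (hbne : (Ω b).Nonempty)
    (νbar : Fin N → ℝ) (hνbar : νbar ∈ Ω b)
    (hstrict : A.mulVec νbar i + b i < 0) :
    ∃ δ : ℝ, 0 < δ ∧
      (∀ t : ℝ, |t| < δ → (Ω (b + t • (Pi.single i 1 : Fin M → ℝ))).Nonempty) ∧
      ConvexOn ℝ (Set.Ioo (-δ) δ) (fun t => V (b + t • (Pi.single i 1 : Fin M → ℝ))) ∧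
      ({g : ℝ | ∀ t ∈ Set.Ioo (-δ) δ,
          V b + g * t ≤ V (b + t • (Pi.single i 1 : Fin M → ℝ))} =
        {x : ℝ | ∃ μstar : Fin M → ℝ, 0 ≤ μstar ∧
          (∀ μ : Fin M → ℝ, 0 ≤ μ → h μstar b ≤ h μ b) ∧ μstar i = x}) ∧
      ({x : ℝ | ∃ μstar : Fin M → ℝ, 0 ≤ μstar ∧
          (∀ μ : Fin M → ℝ, 0 ≤ μ → h μstar b ≤ h μ b) ∧ μstar i = x}).Nonempty ∧
      Bornology.IsBounded {x : ℝ | ∃ μstar : Fin M → ℝ, 0 ≤ μstar ∧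
          (∀ μ : Fin M → ℝ, 0 ≤ μ → h μstar b ≤ h μ b) ∧ μstar i = x} :=
  lcqp_value_subdifferential_constraint_constant_general N M Q hQsymm hQpd c A Ω hΩ V hV h hh b i
    νbar hνbar hstrict
end
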